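/- For all n ≥ 0, Σ_{k≥0} p(n - k(6k+1)) = (S_3(n) + G_3(n) + R(n))/2, where R(n) is the number of partitions of n with nonnegative rank (largest part minus number of parts ≥ 0). -/

import Mathlib

/-!
Write `g = g₃(λ)` and `ε = [g₃(λ) < g₂(λ)]`. For `j ≥ 1`, `λ` contains three copies of each of
`1, …, j - 1` and two copies of `j` exactly when `j < g + ε`, and the partitions of `n` containing
this block are counted by `p(n - j(3j+1)/2)`. Hence `g + ε = 1 + #{j ≥ 1 : λ contains the block}`,
and summing over `λ` gives `S₃(n) + G₃(n) = Σ_{j ≥ 0} p(n - j(3j+1)/2)`.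

Let `N(≤ -m, n)` count the partitions of `n` with rank `≤ -m`. Dyson's adjoint map (subtract one
from every part, add a part `#λ - m - 1`, discard zeros) is a bijection onto the partitions of
`n - m - 1` with rank `≥ -m - 2`, so `N(≤ -m, n) = p(n - m - 1) - N(≤ -m - 3, n - m - 1)`.
Unrolling, `R(n) = p(n) - N(≤ -1, n) = Σ_{j ≥ 0} (-1)^j p(n - j(3j+1)/2)`. Adding the two
expansions, the odd `j` cancel, and `j = 2k` gives `j(3j+1)/2 = k(6k+1)`.
-/

open scoped Classical

/-- `pI m` is the number of partitions of `m`, with `pI m = 0` for `m < 0`. -/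
noncomputable def pI (m : ℤ) : ℕ := if 0 ≤ m then Nat.card (Nat.Partition m.toNat) else 0

/-- The `k`-th triangular number. -/
def T (k : ℕ) : ℕ := k * (k + 1) / 2

/-- The least `r`-gap of a partition: the smallest positive integer appearing
fewer than `r` times as a part; `gap 0 = ⊤` by convention. -/
noncomputable def gap (r : ℕ) {n : ℕ} (lam : Nat.Partition n) : ℕ∞ :=
  if r = 0 then ⊤ else (sInf {i : ℕ | 0 < i ∧ lam.parts.count i < r} : ℕ)

/-- `S r n` is the sum of the least `r`-gaps over all partitions of `n`. -/
noncomputable def S (r n : ℕ) : ℕ := ∑ lam : Nat.Partition n, (gap r lam).toNat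

/-- `G r n` is the number of partitions `lam` of `n` with `gap r lam < gap (r-1) lam`. -/
noncomputable def G (r n : ℕ) : ℕ :=
  Nat.card {lam : Nat.Partition n // gap r lam < gap (r-1) lam}

/-- `U r n` is the number of partitions of `n` into parts not congruent to
`0`, `r`, or `3r` modulo `4r`. -/
noncomputable def U (r n : ℕ) : ℕ :=
  Nat.card {lam : Nat.Partition n //
    ∀ i ∈ lam.parts, i % (4*r) ≠ 0 ∧ i % (4*r) ≠ r % (4*r) ∧ i % (4*r) ≠ (3*r) % (4*r)}

/-- `qD m` is the number of partitions of `m` into distinct parts. -/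
noncomputable def qD (m : ℕ) : ℕ := Nat.card {lam : Nat.Partition m // lam.parts.Nodup}

/-- `pe n` is the number of partitions of `n` into an even number of parts. -/
noncomputable def pe (n : ℕ) : ℕ :=
  Nat.card {lam : Nat.Partition n // Even (Multiset.card lam.parts)}

/-- `R n` is the number of partitions of `n` with nonnegative rank
(largest part minus number of parts is `≥ 0`). -/
noncomputable def R (n : ℕ) : ℕ :=
  Nat.card {lam : Nat.Partition n // (Multiset.card lam.parts : ℤ) ≤ (lam.parts.sup : ℤ)}

/-- The crank of a partition. -/
noncomputable def crank {n : ℕ} (lam : Nat.Partition n) : ℤ :=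
  if lam.parts.count 1 = 0 then (lam.parts.sup : ℤ)
  else (Multiset.card (lam.parts.filter (fun x => lam.parts.count 1 < x)) : ℤ)
        - lam.parts.count 1

/-- `C n` is the number of partitions of `n` with nonnegative crank. -/
noncomputable def C (n : ℕ) : ℕ := Nat.card {lam : Nat.Partition n // 0 ≤ crank lam}

lemma pI_natCast (a : ℕ) : pI a = Nat.card a.Partition := by simp [pI]

lemma pI_eq_zero_of_neg {m : ℤ} (h : m < 0) : pI m = 0 := by simp [pI, not_le.2 h]

lemma Nat.card_subtype_add_card_subtype_not {α : Type*} [Finite α] (p : α → Prop) :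
    Nat.card {x // p x} + Nat.card {x // ¬p x} = Nat.card α := by
  have := Fintype.ofFinite α
  simp only [Nat.card_eq_fintype_card, Fintype.card_subtype_compl]
  have := Fintype.card_subtype_le p
  omega

lemma Finset.sum_Ico_one_id_eq_choose_two (j : ℕ) : ∑ i ∈ Finset.Ico 1 j, i = j.choose 2 := by
  rw [Nat.choose_two_right, ← Finset.sum_range_id, Finset.range_eq_Ico]
  rcases Nat.eq_zero_or_pos j with rfl | hj
  · rfl
  · rw [Finset.sum_eq_sum_Ico_succ_bot hj, zero_add]

lemma Nat.succ_choose_two (j : ℕ) : (j + 1).choose 2 = j.choose 2 + j := by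
  rw [show 2 = 1 + 1 from rfl, Nat.choose_succ_succ', Nat.choose_one_right, add_comm]

lemma Finset.sum_range_two_mul_one_add_neg_one_pow_mul {R : Type*} [CommRing R] (f : ℕ → R)
    (M : ℕ) :
    ∑ j ∈ Finset.range (2 * M), (1 + (-1) ^ j) * f j = 2 * ∑ k ∈ Finset.range M, f (2 * k) := by
  induction M with
  | zero => simp
  | succ M ih =>
    rw [show 2 * (M + 1) = 2 * M + 1 + 1 by ring, Finset.sum_range_succ, Finset.sum_range_succ, ih,
      Finset.sum_range_succ, pow_succ, pow_mul]
    ring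

namespace Nat.Partition

lemma card_parts_le {n : ℕ} (p : n.Partition) : Multiset.card p.parts ≤ n := by
  simpa [p.parts_sum] using Multiset.card_nsmul_le_sum (fun x hx => p.parts_pos hx)

def partitionWithPartsEquiv {n : ℕ} {X : Multiset ℕ} (hX : ∀ i ∈ X, 0 < i) (hXn : X.sum ≤ n) :
    {p : n.Partition // X ≤ p.parts} ≃ (n - X.sum).Partition where
  toFun p := ⟨p.1.parts - X,
    fun hi => p.1.parts_pos (Multiset.mem_of_le (Multiset.sub_le_self _ _) hi), by
      have := congrArg Multiset.sum (tsub_add_cancel_of_le p.2)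
      rw [Multiset.sum_add, p.1.parts_sum] at this
      omega⟩
  invFun q := ⟨⟨q.parts + X, fun hi => (Multiset.mem_add.1 hi).elim q.parts_pos (hX _), by
    rw [Multiset.sum_add, q.parts_sum]
    omega⟩, Multiset.le_add_left _ _⟩
  left_inv p := Subtype.ext <| Partition.ext <| tsub_add_cancel_of_le p.2
  right_inv q := Partition.ext <| add_tsub_cancel_right _ _

end Nat.Partition

lemma card_partitions_containing {X : Multiset ℕ} (hX : ∀ i ∈ X, 0 < i) (n : ℕ) :
    Nat.card {p : n.Partition // X ≤ p.parts} = pI (n - X.sum) := by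
  by_cases hXn : X.sum ≤ n
  · rw [Nat.card_congr (Nat.Partition.partitionWithPartsEquiv hX hXn), ← pI_natCast]
    congr 1
    omega
  · rw [pI_eq_zero_of_neg (by omega), Nat.card_eq_zero]
    refine .inl ⟨fun ⟨p, hp⟩ => hXn ?_⟩
    obtain ⟨u, hu⟩ := Multiset.le_iff_exists_add.1 hp
    have := congrArg Multiset.sum hu
    rw [p.parts_sum, Multiset.sum_add] at this
    omega

def gapBlock (r c j : ℕ) : Multiset ℕ := r • (Finset.Ico 1 j).val + Multiset.replicate c j

lemma gapBlock_le_iff {r c j : ℕ} {s : Multiset ℕ} :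
    gapBlock r c j ≤ s ↔ (∀ i, 0 < i → i < j → r ≤ s.count i) ∧ c ≤ s.count j := by
  simp only [gapBlock, Multiset.le_iff_count, Multiset.count_add, Multiset.count_nsmul,
    Multiset.count_eq_of_nodup (Finset.nodup _), Finset.mem_val, Finset.mem_Ico,
    Multiset.count_replicate]
  refine ⟨fun h => ⟨fun i hi hij => ?_, ?_⟩, fun ⟨h₁, h₂⟩ i => ?_⟩
  · simpa [show 1 ≤ i ∧ i < j from ⟨hi, hij⟩, hij.ne'] using h i
  · simpa using h j
  · by_cases hij : 1 ≤ i ∧ i < j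
    · simpa [hij, (hij.2).ne'] using h₁ i hij.1 hij.2
    · by_cases hji : j = i
      · subst hji
        simpa [hij] using h₂
      · simp [hij, hji]

lemma sum_gapBlock (r c j : ℕ) : (gapBlock r c j).sum = r * j.choose 2 + c * j := by
  rw [gapBlock, Multiset.sum_add, Multiset.sum_nsmul, Multiset.sum_replicate, Finset.sum_val,
    smul_eq_mul, smul_eq_mul, ← Finset.sum_Ico_one_id_eq_choose_two]
  rfl

lemma pos_of_mem_gapBlock {r c j : ℕ} (hj : 0 < j) : ∀ i ∈ gapBlock r c j, 0 < i := by
  intro i hi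
  rcases Multiset.mem_add.1 hi with hi | hi
  · have := (Multiset.mem_nsmul.1 hi).2
    simp only [Finset.mem_val, Finset.mem_Ico] at this
    omega
  · rw [Multiset.eq_of_mem_replicate hi]
    exact hj

section LeastGap

variable {r n : ℕ} (lam : n.Partition)

noncomputable def leastGap (r : ℕ) {n : ℕ} (lam : n.Partition) : ℕ :=
  sInf {i : ℕ | 0 < i ∧ lam.parts.count i < r}

lemma gap_eq_leastGap (hr : r ≠ 0) : gap r lam = leastGap r lam := by
  simp [gap, leastGap, hr]

lemma succ_mem_setOf_count_lt (hr : 0 < r) :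
    n + 1 ∈ {i : ℕ | 0 < i ∧ lam.parts.count i < r} := by
  refine ⟨n.succ_pos, ?_⟩
  rwa [Multiset.count_eq_zero_of_notMem fun h => by
    have := Nat.Partition.le_of_mem_parts h
    omega]

lemma leastGap_le (hr : 0 < r) : leastGap r lam ≤ n + 1 :=
  Nat.sInf_le (succ_mem_setOf_count_lt lam hr)

lemma leastGap_mem (hr : 0 < r) :
    0 < leastGap r lam ∧ lam.parts.count (leastGap r lam) < r :=
  Nat.sInf_mem ⟨_, succ_mem_setOf_count_lt lam hr⟩

lemma le_leastGap_iff (hr : 0 < r) {m : ℕ} :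
    m ≤ leastGap r lam ↔ ∀ i, 0 < i → i < m → r ≤ lam.parts.count i := by
  refine ⟨fun h i hi him => ?_, fun h => ?_⟩
  · by_contra hlt
    have : leastGap r lam ≤ i := Nat.sInf_le ⟨hi, not_le.1 hlt⟩
    omega
  · by_contra hlt
    obtain ⟨hpos, hcount⟩ := leastGap_mem lam hr
    exact (h _ hpos (not_le.1 hlt)).not_gt hcount

lemma gap_lt_gap_pred_iff (hr : 0 < r) :
    gap r lam < gap (r - 1) lam ↔ r - 1 ≤ lam.parts.count (leastGap r lam) := by
  rw [gap_eq_leastGap lam hr.ne']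
  obtain rfl | hr2 : r = 1 ∨ 2 ≤ r := by omega
  · simp [gap]
  rw [gap_eq_leastGap lam (by omega), Nat.cast_lt, ← Nat.add_one_le_iff,
    le_leastGap_iff lam (by omega)]
  have hbelow := (le_leastGap_iff lam hr).1 le_rfl
  refine ⟨fun h => h _ (leastGap_mem lam hr).1 (lt_add_one _), fun h i hi hig => ?_⟩
  rcases Nat.lt_succ_iff_lt_or_eq.1 hig with hig | rfl
  · exact (Nat.sub_le r 1).trans (hbelow i hi hig)
  · exact h

lemma gapBlock_le_parts_iff (hr : 0 < r) {j : ℕ} (hj : 0 < j) :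
    gapBlock r (r - 1) j ≤ lam.parts ↔
      j < leastGap r lam + if gap r lam < gap (r - 1) lam then 1 else 0 := by
  simp only [gapBlock_le_iff, ← le_leastGap_iff lam hr, gap_lt_gap_pred_iff lam hr]
  rcases lt_trichotomy j (leastGap r lam) with hlt | rfl | hgt
  · have := (le_leastGap_iff lam hr).1 le_rfl j hj hlt
    split_ifs <;> omega
  · split_ifs <;> omega
  · split_ifs <;> omega

lemma leastGap_add_ite_eq_card_filter (hr : 0 < r) {N : ℕ} (hN : n < N) :
    leastGap r lam + (if gap r lam < gap (r - 1) lam then 1 else 0) =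
      1 + ((Finset.range N).filter fun j => gapBlock r (r - 1) (j + 1) ≤ lam.parts).card := by
  have hle := leastGap_le lam hr
  have hpos := (leastGap_mem lam hr).1
  have hfilter : (Finset.range N).filter (fun j => gapBlock r (r - 1) (j + 1) ≤ lam.parts) =
      Finset.range (leastGap r lam + (if gap r lam < gap (r - 1) lam then 1 else 0) - 1) := by
    ext j
    rw [Finset.mem_filter, Finset.mem_range, Finset.mem_range,
      gapBlock_le_parts_iff lam hr j.succ_pos]
    split_ifs <;> omega
  rw [hfilter, Finset.card_range]
  split_ifs <;> omega

end LeastGap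

theorem S_add_G {r : ℕ} (hr : 0 < r) {n N : ℕ} (hN : n < N) :
    S r n + G r n =
      Nat.card n.Partition + ∑ j ∈ Finset.range N, pI (n - (gapBlock r (r - 1) (j + 1)).sum) := by
  have hS : S r n = ∑ lam : n.Partition, leastGap r lam := by
    simp only [S, gap_eq_leastGap _ hr.ne', ENat.toNat_natCast]
  have hG : G r n = ∑ lam : n.Partition, if gap r lam < gap (r - 1) lam then 1 else 0 := by
    rw [G, Nat.card_eq_fintype_card, Fintype.card_subtype, Finset.card_filter]
  calc S r n + G r n
      = ∑ lam : n.Partition, (1 + ∑ j ∈ Finset.range N,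
          if gapBlock r (r - 1) (j + 1) ≤ lam.parts then 1 else 0) := by
        rw [hS, hG, ← Finset.sum_add_distrib]
        exact Finset.sum_congr rfl fun lam _ => by
          rw [leastGap_add_ite_eq_card_filter lam hr hN, Finset.card_filter]
    _ = Nat.card n.Partition + ∑ j ∈ Finset.range N,
          Nat.card {lam : n.Partition // gapBlock r (r - 1) (j + 1) ≤ lam.parts} := by
        rw [Finset.sum_add_distrib, Finset.sum_comm]
        simp only [Finset.sum_const, Finset.card_univ, smul_eq_mul, mul_one, ← Finset.card_filter,
          ← Fintype.card_subtype, Nat.card_eq_fintype_card]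
    _ = _ := by simp_rw [card_partitions_containing (pos_of_mem_gapBlock (Nat.succ_pos _))]

lemma Multiset.sup_mem_of_ne_zero {α : Type*} [LinearOrder α] [OrderBot α] {s : Multiset α}
    (hs : s ≠ 0) : s.sup ∈ s := by
  obtain ⟨y, hy, hmax⟩ := s.exists_max_image id hs
  rwa [le_antisymm (Multiset.sup_le.2 hmax) (Multiset.le_sup hy)]

section Dyson

open Multiset

variable {m : ℕ} {s t : Multiset ℕ}

lemma Multiset.sum_map_add_one (s : Multiset ℕ) : (s.map (· + 1)).sum = s.sum + card s := by
  rw [sum_map_add, map_id', map_const', sum_replicate, smul_eq_mul, mul_one]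

lemma Multiset.sum_map_sub_one_add_card (hs : ∀ x ∈ s, 0 < x) :
    (s.map (· - 1)).sum + card s = s.sum := by
  calc (s.map (· - 1)).sum + card s = (s.map fun x => (x - 1) + 1).sum := by
        rw [sum_map_add, map_const', sum_replicate, smul_eq_mul, mul_one]
    _ = s.sum := by rw [map_congr rfl fun x hx => Nat.sub_add_cancel (hs x hx), map_id']

lemma Multiset.sum_filter_pos (s : Multiset ℕ) : (s.filter (0 < ·)).sum = s.sum := by
  conv_rhs => rw [← sum_filter_add_sum_filter_not (0 < ·)]
  rw [sum_eq_zero fun x hx => Nat.eq_zero_of_not_pos (mem_filter.1 hx).2, add_zero]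

lemma Multiset.card_erase_sup (t : Multiset ℕ) : card (t.erase t.sup) = card t - 1 := by
  rcases eq_or_ne t 0 with rfl | ht
  · rfl
  · exact card_erase_of_mem (sup_mem_of_ne_zero ht)

lemma Multiset.sum_erase_sup (t : Multiset ℕ) : (t.erase t.sup).sum + t.sup = t.sum := by
  rcases eq_or_ne t 0 with rfl | ht
  · rfl
  · rw [add_comm, sum_erase (sup_mem_of_ne_zero ht)]

lemma Multiset.filter_pos_sup_cons_erase (ht : ∀ x ∈ t, 0 < x) :
    (t.sup ::ₘ t.erase t.sup).filter (0 < ·) = t := by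
  rcases eq_or_ne t 0 with rfl | ht0
  · rfl
  · rw [cons_erase (sup_mem_of_ne_zero ht0), filter_eq_self.2 ht]

lemma Multiset.filter_one_lt_add_replicate_count_one (hs : ∀ x ∈ s, 0 < x) :
    s.filter (1 < ·) + replicate (s.count 1) 1 = s := by
  conv_rhs => rw [← filter_add_not (1 < ·) s]
  rw [← filter_eq']
  congr 1
  refine filter_congr fun x hx => ?_
  have := hs x hx
  omega

lemma succ_le_card_of_sup_add_le (hm : 1 ≤ m) (hs : ∀ x ∈ s, 0 < x)
    (hrank : s.sup + m ≤ card s) : m + 1 ≤ card s := by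
  rcases eq_or_ne s 0 with rfl | hs0
  · simp at hrank
    omega
  · have := hs _ (sup_mem_of_ne_zero hs0)
    omega

def dysonMap (m : ℕ) (s : Multiset ℕ) : Multiset ℕ :=
  ((card s - (m + 1)) ::ₘ s.map (· - 1)).filter (0 < ·)

def dysonInv (m : ℕ) (t : Multiset ℕ) : Multiset ℕ :=
  (t.erase t.sup).map (· + 1) + replicate (t.sup + m + 1 - (card t - 1)) 1

lemma sum_dysonMap (hs : ∀ x ∈ s, 0 < x) (hcard : m + 1 ≤ card s) :
    (dysonMap m s).sum + (m + 1) = s.sum := by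
  have := sum_map_sub_one_add_card hs
  rw [dysonMap, sum_filter_pos, sum_cons]
  omega

lemma card_dysonMap_le : card (dysonMap m s) ≤ (dysonMap m s).sup + m + 2 := by
  have hcard : card (dysonMap m s) ≤ card s + 1 := by
    simpa [dysonMap] using
      card_le_card (filter_le (0 < ·) ((card s - (m + 1)) ::ₘ s.map (· - 1)))
  have hsup : card s - (m + 1) = 0 ∨ card s - (m + 1) ≤ (dysonMap m s).sup := by
    refine or_iff_not_imp_left.2 fun h => le_sup (mem_filter.2 ⟨mem_cons_self _ _, ?_⟩)
    omega
  omega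

lemma pos_of_mem_dysonInv : ∀ x ∈ dysonInv m t, 0 < x := by
  intro x hx
  rcases mem_add.1 hx with hx | hx
  · obtain ⟨y, -, rfl⟩ := mem_map.1 hx
    exact y.succ_pos
  · rw [eq_of_mem_replicate hx]
    exact one_pos

lemma card_dysonInv (hrank : card t ≤ t.sup + m + 2) :
    card (dysonInv m t) = t.sup + m + 1 := by
  rw [dysonInv, card_add, card_map, card_replicate, card_erase_sup]
  omega

lemma sum_dysonInv (hrank : card t ≤ t.sup + m + 2) :
    (dysonInv m t).sum = t.sum + (m + 1) := by
  have := sum_erase_sup t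
  rw [dysonInv, sum_add, sum_map_add_one, sum_replicate, smul_eq_mul, mul_one, card_erase_sup]
  omega

lemma sup_add_le_card_dysonInv (hrank : card t ≤ t.sup + m + 2) :
    (dysonInv m t).sup + m ≤ card (dysonInv m t) := by
  have hsup : (dysonInv m t).sup ≤ t.sup + 1 := by
    refine sup_le.2 fun x hx => ?_
    rcases mem_add.1 hx with hx | hx
    · obtain ⟨y, hy, rfl⟩ := mem_map.1 hx
      exact Nat.succ_le_succ (le_sup (mem_of_mem_erase hy))
    · rw [eq_of_mem_replicate hx]
      omega
  rw [card_dysonInv hrank]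
  omega

lemma dysonMap_dysonInv (ht : ∀ x ∈ t, 0 < x) (hrank : card t ≤ t.sup + m + 2) :
    dysonMap m (dysonInv m t) = t := by
  have hmap : (dysonInv m t).map (· - 1) =
      t.erase t.sup + replicate (t.sup + m + 1 - (card t - 1)) 0 := by
    rw [dysonInv, map_add, map_map, map_replicate]
    simp
  rw [dysonMap, card_dysonInv hrank, show t.sup + m + 1 - (m + 1) = t.sup by omega, hmap,
    ← cons_add, filter_add, filter_pos_sup_cons_erase ht,
    filter_eq_nil.2 fun x hx => by simp [eq_of_mem_replicate hx], add_zero]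

lemma sup_dysonMap_eq_and_erase_eq (hrank : s.sup + m ≤ card s) :
    (dysonMap m s).sup = card s - (m + 1) ∧
      (dysonMap m s).erase (card s - (m + 1)) = (s.map (· - 1)).filter (0 < ·) := by
  -- the inserted part `card s - (m + 1)` is the largest part of `dysonMap m s`
  have hle : ∀ x ∈ (s.map (· - 1)).filter (0 < ·), x ≤ card s - (m + 1) := by
    intro x hx
    obtain ⟨y, hy, rfl⟩ := mem_map.1 (mem_of_mem_filter hx)
    have := le_sup hy
    omega
  obtain h0 | hpos : card s - (m + 1) = 0 ∨ 0 < card s - (m + 1) := Nat.eq_zero_or_pos _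
  · have hempty : (s.map (· - 1)).filter (0 < ·) = 0 := eq_zero_of_forall_notMem fun x hx => by
      have := hle x hx
      have := (mem_filter.1 hx).2
      omega
    rw [dysonMap, h0, filter_cons_of_neg _ (lt_irrefl 0), hempty]
    exact ⟨rfl, rfl⟩
  · rw [dysonMap, filter_cons_of_pos _ hpos, sup_cons, sup_eq_left.2 (sup_le.2 hle),
      erase_cons_head]
    exact ⟨rfl, rfl⟩

lemma map_add_one_filter_pos_map_sub_one (s : Multiset ℕ) :
    ((s.map (· - 1)).filter (0 < ·)).map (· + 1) = s.filter (1 < ·) := by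
  have hfilter : s.filter ((0 < ·) ∘ (· - 1)) = s.filter (1 < ·) :=
    filter_congr fun _ _ => Nat.sub_pos_iff_lt
  rw [filter_map, map_map, hfilter]
  conv_rhs => rw [← map_id (s.filter (1 < ·))]
  exact map_congr rfl fun x hx => Nat.sub_add_cancel (mem_filter.1 hx).2.le

lemma dysonInv_dysonMap (hm : 1 ≤ m) (hs : ∀ x ∈ s, 0 < x) (hrank : s.sup + m ≤ card s) :
    dysonInv m (dysonMap m s) = s := by
  have hcard := succ_le_card_of_sup_add_le hm hs hrank
  have hcount := congrArg card (filter_one_lt_add_replicate_count_one hs)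
  rw [card_add, card_replicate] at hcount
  obtain ⟨hsup, herase⟩ := sup_dysonMap_eq_and_erase_eq hrank
  rw [dysonInv, ← card_erase_sup, hsup, herase,
    ← card_map (· + 1) ((s.map (· - 1)).filter (0 < ·)), map_add_one_filter_pos_map_sub_one,
    show card s - (m + 1) + m + 1 - card (s.filter (1 < ·)) = s.count 1 by omega]
  exact filter_one_lt_add_replicate_count_one hs

end Dyson

def dysonEquiv {m n : ℕ} (hm : 1 ≤ m) (hn : m + 1 ≤ n) :
    {p : n.Partition // p.parts.sup + m ≤ Multiset.card p.parts} ≃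
      {q : (n - (m + 1)).Partition // Multiset.card q.parts ≤ q.parts.sup + m + 2} where
  toFun p := ⟨⟨dysonMap m p.1.parts, fun hx => (Multiset.mem_filter.1 hx).2, by
    have hpos : ∀ x ∈ p.1.parts, 0 < x := fun _ hx => p.1.parts_pos hx
    have := sum_dysonMap hpos (succ_le_card_of_sup_add_le hm hpos p.2)
    rw [p.1.parts_sum] at this
    omega⟩, card_dysonMap_le⟩
  invFun q := ⟨⟨dysonInv m q.1.parts, fun hx => pos_of_mem_dysonInv _ hx, by
    rw [sum_dysonInv q.2, q.1.parts_sum]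
    omega⟩, sup_add_le_card_dysonInv q.2⟩
  left_inv p := Subtype.ext <| Nat.Partition.ext <|
    dysonInv_dysonMap hm (fun _ hx => p.1.parts_pos hx) p.2
  right_inv q := Subtype.ext <| Nat.Partition.ext <|
    dysonMap_dysonInv (fun _ hx => q.1.parts_pos hx) q.2

noncomputable def rankLeNeg (m n : ℕ) : ℕ :=
  Nat.card {p : n.Partition // p.parts.sup + m ≤ Multiset.card p.parts}

lemma rankLeNeg_eq_zero {m n : ℕ} (hm : 1 ≤ m) (hn : n ≤ m) : rankLeNeg m n = 0 := by
  refine Nat.card_eq_zero.2 (.inl ⟨fun ⟨p, hp⟩ => ?_⟩)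
  have := succ_le_card_of_sup_add_le hm (fun _ hx => p.parts_pos hx) hp
  have := p.card_parts_le
  omega

lemma rankLeNeg_add_rankLeNeg {m n : ℕ} (hm : 1 ≤ m) (hn : m + 1 ≤ n) :
    rankLeNeg m n + rankLeNeg (m + 3) (n - (m + 1)) = Nat.card (n - (m + 1)).Partition := by
  rw [rankLeNeg, Nat.card_congr (dysonEquiv hm hn), rankLeNeg,
    ← Nat.card_subtype_add_card_subtype_not fun q : (n - (m + 1)).Partition =>
      Multiset.card q.parts ≤ q.parts.sup + m + 2]
  congr 1
  exact Nat.card_congr (Equiv.subtypeEquivRight fun q => by omega)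

lemma R_add_rankLeNeg_one (n : ℕ) : R n + rankLeNeg 1 n = Nat.card n.Partition := by
  rw [R, rankLeNeg, ← Nat.card_subtype_add_card_subtype_not fun p : n.Partition =>
    (Multiset.card p.parts : ℤ) ≤ p.parts.sup]
  congr 1
  exact Nat.card_congr (Equiv.subtypeEquivRight fun p => by omega)

-- `(m + 1) j + 3 C(j, 2) = j m + j (3 j - 1) / 2`
def dysonExp (m j : ℕ) : ℕ := (m + 1) * j + 3 * j.choose 2

lemma dysonExp_succ (m j : ℕ) : dysonExp m (j + 1) = m + 1 + dysonExp (m + 3) j := by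
  rw [dysonExp, dysonExp, Nat.succ_choose_two]
  ring

lemma le_dysonExp (m j : ℕ) : j ≤ dysonExp m j := by
  unfold dysonExp
  nlinarith

lemma dysonExp_one_two_mul (k : ℕ) : dysonExp 1 (2 * k) = k * (6 * k + 1) := by
  induction k with
  | zero => rfl
  | succ k ih =>
    rw [show 2 * (k + 1) = 2 * k + 1 + 1 by ring, dysonExp, Nat.succ_choose_two,
      Nat.succ_choose_two]
    rw [dysonExp] at ih
    linarith

lemma sum_gapBlock_three_two (j : ℕ) : (gapBlock 3 2 j).sum = dysonExp 1 j := by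
  rw [sum_gapBlock, dysonExp]
  ring

theorem rankLeNeg_eq_sum {m n N : ℕ} (hm : 1 ≤ m) (hN : n < N) :
    (rankLeNeg m n : ℤ) = ∑ j ∈ Finset.range N, (-1) ^ j * (pI (n - dysonExp m (j + 1)) : ℤ) := by
  induction n using Nat.strong_induction_on generalizing m N with
  | _ n ih =>
    by_cases hn : m + 1 ≤ n
    · obtain ⟨N, rfl⟩ : ∃ N', N = N' + 1 := ⟨N - 1, by omega⟩
      have hrec := rankLeNeg_add_rankLeNeg hm hn
      have hfirst : (pI (n - dysonExp m (0 + 1)) : ℤ) = Nat.card (n - (m + 1)).Partition := by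
        rw [← pI_natCast, dysonExp_succ]
        congr 2
        simp [dysonExp]
        omega
      have hshift : ∀ k, (-1) ^ (k + 1) * (pI (n - dysonExp m (k + 1 + 1)) : ℤ) =
          -((-1) ^ k * pI ((n - (m + 1) : ℕ) - dysonExp (m + 3) (k + 1))) := by
        intro k
        rw [dysonExp_succ m (k + 1), show (n : ℤ) - (m + 1 + dysonExp (m + 3) (k + 1) : ℕ) =
          (n - (m + 1) : ℕ) - dysonExp (m + 3) (k + 1) by omega]
        ring
      have ih' := ih (n - (m + 1)) (by omega) (show 1 ≤ m + 3 by omega)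
        (show n - (m + 1) < N by omega)
      rw [Finset.sum_range_succ', Finset.sum_congr rfl fun k _ => hshift k, Finset.sum_neg_distrib,
        ← ih', pow_zero, one_mul, hfirst]
      omega
    · rw [rankLeNeg_eq_zero hm (by omega), Nat.cast_zero, eq_comm]
      refine Finset.sum_eq_zero fun j _ => ?_
      rw [pI_eq_zero_of_neg, Nat.cast_zero, mul_zero]
      have := le_dysonExp (m + 3) j
      rw [dysonExp_succ]
      omega

lemma pI_sub_dysonExp_zero (m n : ℕ) : pI (n - dysonExp m 0) = Nat.card n.Partition := by
  simp [dysonExp, pI_natCast]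

lemma S_three_add_G_three {n N : ℕ} (hN : n < N) :
    (S 3 n + G 3 n : ℤ) = ∑ j ∈ Finset.range (N + 1), (pI (n - dysonExp 1 j) : ℤ) := by
  have := S_add_G (r := 3) (by norm_num) hN
  simp only [Nat.reduceSub, sum_gapBlock_three_two] at this
  rw [Finset.sum_range_succ', pI_sub_dysonExp_zero, add_comm _ (Nat.card n.Partition : ℤ)]
  exact_mod_cast this

lemma R_eq_sum {n N : ℕ} (hN : n < N) :
    (R n : ℤ) = ∑ j ∈ Finset.range (N + 1), (-1) ^ j * (pI (n - dysonExp 1 j) : ℤ) := by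
  have := R_add_rankLeNeg_one n
  simp only [Finset.sum_range_succ', pow_succ, mul_neg_one, neg_mul, Finset.sum_neg_distrib,
    ← rankLeNeg_eq_sum le_rfl hN, pow_zero, one_mul, pI_sub_dysonExp_zero]
  omega

theorem stmt17 (n : ℕ) :
    ∑' k : ℕ, (pI ((n : ℤ) - (k : ℤ) * (6 * k + 1)) : ℚ)
      = ((S 3 n : ℚ) + G 3 n + R n) / 2 := by
  have htsum : ∑' k : ℕ, (pI ((n : ℤ) - (k : ℤ) * (6 * k + 1)) : ℚ) =
      ∑ k ∈ Finset.range (n + 1), (pI (n - dysonExp 1 (2 * k)) : ℚ) := by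
    rw [tsum_eq_sum (s := Finset.range (n + 1))]
    · exact Finset.sum_congr rfl fun k _ => by simp [dysonExp_one_two_mul]
    · intro k hk
      rw [pI_eq_zero_of_neg, Nat.cast_zero]
      simp only [Finset.mem_range, not_lt] at hk
      nlinarith
  have hsum : (S 3 n + G 3 n + R n : ℤ) =
      2 * ∑ k ∈ Finset.range (n + 1), (pI (n - dysonExp 1 (2 * k)) : ℤ) := by
    rw [S_three_add_G_three (N := 2 * n + 1) (by omega), R_eq_sum (N := 2 * n + 1) (by omega),
      ← Finset.sum_add_distrib, show 2 * n + 1 + 1 = 2 * (n + 1) by ring,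
      ← Finset.sum_range_two_mul_one_add_neg_one_pow_mul fun j => (pI (n - dysonExp 1 j) : ℤ)]
    exact Finset.sum_congr rfl fun j _ => by ring
  rw [htsum, eq_div_iff two_ne_zero]
  have := congrArg (Int.cast : ℤ → ℚ) hsum
  push_cast at this
  linarith
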